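/- arXiv:0708.4195 — 3 statements merged into one kernel-verified Lean document; each statement's English description precedes it below -/
import Mathlib

section
/- Let 𝒜 be a Banach algebra and 𝒰 an ultrafilter on an index set I. The ultrapower (𝒜)_𝒰 has an identity element if and only if 𝒜 has an identity element. -/
set_option maxSynthPendingDepth 3
set_option maxHeartbeats 1000000
set_option synthInstance.maxHeartbeats 1000000

noncomputable section

open Filter Metric Topology ContinuousLinearMap
open scoped ENNReal

universe u v w y

namespace UPaper

/-- The (topological) dual of a complex normed space. -/
abbrev Dl (E : Type u) [NormedAddCommGroup E] [NormedSpace ℂ E] : Type u := E →L[ℂ] ℂ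

/-- An ultrafilter is countably incomplete when it contains a decreasing sequence of
sets with empty intersection. -/
def CountablyIncomplete {I : Type u} (𝒰 : Ultrafilter I) : Prop :=
  ∃ U : ℕ → Set I, (∀ n, U n ∈ 𝒰) ∧ (∀ n, U (n + 1) ⊆ U n) ∧ (⋂ n, U n) = (∅ : Set I)

/-- `π` realises `F` as the ultrapower `(E)_𝒰` of the Banach space `E` along the
ultrafilter `𝒰`: it is a linear surjection from `ℓ^∞(E,I)` onto `F` such that
`‖π x‖ = lim_𝒰 ‖x_i‖`.  This forces the kernel of `π` to be exactly the closed subspace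
`𝒩_𝒰` of families with `lim_𝒰 ‖x_i‖ = 0`, so that `F` is isometrically isomorphic to the
quotient `ℓ^∞(E,I)/𝒩_𝒰`, i.e. to the Banach space ultrapower `(E)_𝒰`. -/
def IsUltrapower {I : Type u} (𝒰 : Ultrafilter I) {E : Type v} {F : Type w}
    [NormedAddCommGroup E] [NormedSpace ℂ E] [NormedAddCommGroup F] [NormedSpace ℂ F]
    (π : lp (fun _ : I => E) ∞ →ₗ[ℂ] F) : Prop :=
  Function.Surjective π ∧
    ∀ x : lp (fun _ : I => E) ∞, Tendsto (fun i => ‖x i‖) (𝒰 : Filter I) (nhds ‖π x‖)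

/-- `π` realises `B` as the ultrapower `(A)_𝒰` of the Banach algebra `A` along `𝒰`:
in addition to being a Banach space ultrapower, `π` respects the coordinatewise
product on `ℓ^∞(A,I)`. -/
def IsUltrapowerAlg {I : Type u} (𝒰 : Ultrafilter I) {A : Type v} {B : Type w}
    [NonUnitalNormedRing A] [NormedSpace ℂ A] [IsScalarTower ℂ A A] [SMulCommClass ℂ A A]
    [NonUnitalNormedRing B] [NormedSpace ℂ B]
    (π : lp (fun _ : I => A) ∞ →ₗ[ℂ] B) : Prop :=
  IsUltrapower 𝒰 π ∧ ∀ x y : lp (fun _ : I => A) ∞, π (x * y) = π x * π y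

/-!
If `e` is an identity of `A`, the class of the constant family `e` is an identity of `(A)_𝒰`.
Conversely, let the class of `u` be an identity of `(A)_𝒰`. Testing this against every bounded
family `x` gives `lim_𝒰 ‖u_i x_i - x_i‖ = 0`, and since `x` is arbitrary this upgrades to
operator norms: `‖1 - L_{u_i}‖ → 0` along `𝒰`, and likewise for right multiplication `R_{u_i}`.
For some `i` both are below `1`, so `L_{u_i}` and `R_{u_i}` are invertible by the Neumann series.
Finally, in any semigroup in which left and right multiplication by one element `v` are
bijective, solving `v e = v` and `f v = v` yields a two-sided identity `e = f`.
-/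

theorem exists_identity_of_bijective_mul_left_right {S : Type*} [Semigroup S] {v : S}
    (hl : Function.Bijective (v * ·)) (hr : Function.Bijective (· * v)) :
    ∃ e : S, ∀ a : S, e * a = a ∧ a * e = a := by
  obtain ⟨e, he⟩ := hl.2 v
  obtain ⟨f, hf⟩ := hr.2 v
  have left_id : ∀ a, e * a = a := fun a => hl.1 (by simp only [← mul_assoc, he])
  have right_id : ∀ a, a * f = a := fun a => hr.1 (by simp only [mul_assoc, hf])
  have hef : e = f := (right_id e).symm.trans (left_id f)
  exact ⟨e, fun a => ⟨left_id a, hef ▸ right_id a⟩⟩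

theorem _root_.ContinuousLinearMap.bijective_of_norm_one_sub_lt_one {𝕜 E : Type*}
    [NontriviallyNormedField 𝕜] [NormedAddCommGroup E] [NormedSpace 𝕜 E] [CompleteSpace E]
    {T : E →L[𝕜] E} (hT : ‖1 - T‖ < 1) : Function.Bijective T :=
  ContinuousLinearMap.isUnit_iff_bijective.1 <|
    sub_sub_cancel 1 T ▸ isUnit_one_sub_of_norm_lt_one hT

theorem tendsto_opNorm_zero_of_forall_lp {𝕜 E F : Type*} {I : Type*}
    [DenselyNormedField 𝕜] [NormedAddCommGroup E] [NormedSpace 𝕜 E]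
    [NormedAddCommGroup F] [NormedSpace 𝕜 F] {l : Filter I} (T : I → E →L[𝕜] F)
    (hT : ∀ x : lp (fun _ : I => E) ∞, Tendsto (fun i => ‖T i (x i)‖) l (𝓝 0)) :
    Tendsto (fun i => ‖T i‖) l (𝓝 0) := by
  refine tendsto_order.2 ⟨fun _ hε => .of_forall fun _ => hε.trans_le (norm_nonneg _),
    fun ε hε => ?_⟩
  by_contra hfreq
  simp only [Filter.not_eventually, not_lt] at hfreq
  -- a bounded family of near-norming vectors for those `T i` with `ε ≤ ‖T i‖` contradicts `hT`
  have witness : ∀ i, ∃ x : E, ‖x‖ ≤ 1 ∧ (ε ≤ ‖T i‖ → ε / 2 < ‖T i x‖) := fun i => by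
    by_cases hi : ε ≤ ‖T i‖
    · obtain ⟨x, hx, hTx⟩ := (T i).exists_lt_apply_of_lt_opNorm ((half_lt_self hε).trans_le hi)
      exact ⟨x, hx.le, fun _ => hTx⟩
    · exact ⟨0, by simp, fun h => absurd h hi⟩
  choose x hx_le hx_big using witness
  have hx : Memℓp x ∞ := memℓp_infty ⟨1, by rintro _ ⟨i, rfl⟩; exact hx_le i⟩
  obtain ⟨i, hi_big, hi_small⟩ :=
    (hfreq.and_eventually ((hT ⟨x, hx⟩).eventually (gt_mem_nhds (half_pos hε)))).exists
  exact (hx_big i hi_big).not_gt hi_small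

section Ultrapower

variable {I : Type u} {A : Type v} {B : Type w}
  [NonUnitalNormedRing A] [NormedSpace ℂ A] [IsScalarTower ℂ A A] [SMulCommClass ℂ A A]
  [NonUnitalNormedRing B] [NormedSpace ℂ B]
  {𝒰 : Ultrafilter I} {π : lp (fun _ : I => A) ∞ →ₗ[ℂ] B}

theorem IsUltrapower.tendsto_norm_zero_of_map_eq_zero {E F : Type*}
    [NormedAddCommGroup E] [NormedSpace ℂ E] [NormedAddCommGroup F] [NormedSpace ℂ F]
    {π : lp (fun _ : I => E) ∞ →ₗ[ℂ] F} (hπ : IsUltrapower 𝒰 π) {x : lp (fun _ : I => E) ∞}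
    (hx : π x = 0) : Tendsto (fun i => ‖x i‖) 𝒰 (𝓝 0) := by
  simpa [hx] using hπ.2 x

theorem IsUltrapowerAlg.tendsto_norm_one_sub_mul_left (hπ : IsUltrapowerAlg 𝒰 π)
    {u : lp (fun _ : I => A) ∞} (hu : ∀ b, π u * b = b) :
    Tendsto (fun i => ‖1 - mul ℂ A (u i)‖) 𝒰 (𝓝 0) := by
  refine tendsto_opNorm_zero_of_forall_lp _ fun x => ?_
  have hx : π (x - u * x) = 0 := by rw [map_sub, hπ.2, hu, sub_self]
  exact hπ.1.tendsto_norm_zero_of_map_eq_zero hx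

theorem IsUltrapowerAlg.tendsto_norm_one_sub_mul_right (hπ : IsUltrapowerAlg 𝒰 π)
    {u : lp (fun _ : I => A) ∞} (hu : ∀ b, b * π u = b) :
    Tendsto (fun i => ‖1 - (mul ℂ A).flip (u i)‖) 𝒰 (𝓝 0) := by
  refine tendsto_opNorm_zero_of_forall_lp _ fun x => ?_
  have hx : π (x - x * u) = 0 := by rw [map_sub, hπ.2, hu, sub_self]
  exact hπ.1.tendsto_norm_zero_of_map_eq_zero hx

theorem IsUltrapowerAlg.exists_identity (hπ : IsUltrapowerAlg 𝒰 π) {e : A}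
    (he : ∀ a, e * a = a ∧ a * e = a) : ∃ e' : B, ∀ b, e' * b = b ∧ b * e' = b := by
  let c : lp (fun _ : I => A) ∞ := ⟨fun _ => e, memℓp_infty ⟨‖e‖, by rintro _ ⟨_, rfl⟩; rfl⟩⟩
  refine ⟨π c, fun b => ?_⟩
  obtain ⟨x, rfl⟩ := hπ.1.1 b
  rw [← hπ.2, ← hπ.2]
  constructor <;> congr 1 <;> ext i <;> simp [lp.infty_coeFn_mul, c, he]

end Ultrapower

theorem ultrapower_unital_iff_unital_general
    {I : Type u} {A : Type v} {B : Type w}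
    [NonUnitalNormedRing A] [NormedSpace ℂ A] [IsScalarTower ℂ A A] [SMulCommClass ℂ A A]
    [CompleteSpace A]
    [NonUnitalNormedRing B] [NormedSpace ℂ B]
    (𝒰 : Ultrafilter I) (π : lp (fun _ : I => A) ∞ →ₗ[ℂ] B)
    (hπ : IsUltrapowerAlg 𝒰 π) :
    (∃ e : B, ∀ b : B, e * b = b ∧ b * e = b) ↔ (∃ e : A, ∀ a : A, e * a = a ∧ a * e = a) := by
  refine ⟨fun ⟨e, he⟩ => ?_, fun ⟨e, he⟩ => hπ.exists_identity he⟩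
  obtain ⟨u, rfl⟩ := hπ.1.1 e
  have hleft := (hπ.tendsto_norm_one_sub_mul_left fun b => (he b).1).eventually
    (gt_mem_nhds one_pos)
  have hright := (hπ.tendsto_norm_one_sub_mul_right fun b => (he b).2).eventually
    (gt_mem_nhds one_pos)
  obtain ⟨i, hi_left, hi_right⟩ := (hleft.and hright).exists
  exact exists_identity_of_bijective_mul_left_right
    (bijective_of_norm_one_sub_lt_one hi_left) (bijective_of_norm_one_sub_lt_one hi_right)

/-- Let `𝒜` be a Banach algebra and `𝒰` an ultrafilter on an index
set `I`.  The ultrapower `(𝒜)_𝒰` has an identity element if and only if `𝒜` has an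
identity element. -/
theorem ultrapower_unital_iff_unital
    {I : Type u} {A : Type v} {B : Type w}
    [NonUnitalNormedRing A] [NormedSpace ℂ A] [IsScalarTower ℂ A A] [SMulCommClass ℂ A A]
    [CompleteSpace A]
    [NonUnitalNormedRing B] [NormedSpace ℂ B] [IsScalarTower ℂ B B] [SMulCommClass ℂ B B]
    [CompleteSpace B]
    (𝒰 : Ultrafilter I) (π : lp (fun _ : I => A) ∞ →ₗ[ℂ] B)
    (hπ : IsUltrapowerAlg 𝒰 π) :
    (∃ e : B, ∀ b : B, e * b = b ∧ b * e = b) ↔ (∃ e : A, ∀ a : A, e * a = a ∧ a * e = a) :=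
  ultrapower_unital_iff_unital_general 𝒰 π hπ

end UPaper
end
end

section
/- Let 𝒜 be a Banach algebra and 𝒰 an ultrafilter on an index set I. The ultrapower (𝒜)_𝒰 has a bounded approximate identity if and only if 𝒜 has a bounded approximate identity; the same statement holds for bounded left approximate identities and for bounded right approximate identities. -/
set_option maxSynthPendingDepth 3
set_option maxHeartbeats 1000000
set_option synthInstance.maxHeartbeats 1000000

noncomputable section

open Filter Metric Topology ContinuousLinearMap
open scoped ENNReal

universe u v w y

namespace UPaper

/-- `A` has a bounded left approximate identity: a norm-bounded net `(e_d)` over a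
directed preorder such that `‖a − e_d a‖ → 0` for every `a ∈ A`. -/
def HasLeftBAI (A : Type u) [NonUnitalNormedRing A] : Prop :=
  ∃ (D : Type u) (r : D → D → Prop) (e : D → A),
    Nonempty D ∧ (∀ d, r d d) ∧ (∀ d₁ d₂ d₃, r d₁ d₂ → r d₂ d₃ → r d₁ d₃) ∧
    (∀ d₁ d₂, ∃ d₃, r d₁ d₃ ∧ r d₂ d₃) ∧
    (∃ M : ℝ, ∀ d, ‖e d‖ ≤ M) ∧
    ∀ a : A, ∀ ε > (0 : ℝ), ∃ d₀, ∀ d, r d₀ d → ‖a - e d * a‖ < ε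

/-- `A` has a bounded right approximate identity. -/
def HasRightBAI (A : Type u) [NonUnitalNormedRing A] : Prop :=
  ∃ (D : Type u) (r : D → D → Prop) (e : D → A),
    Nonempty D ∧ (∀ d, r d d) ∧ (∀ d₁ d₂ d₃, r d₁ d₂ → r d₂ d₃ → r d₁ d₃) ∧
    (∀ d₁ d₂, ∃ d₃, r d₁ d₃ ∧ r d₂ d₃) ∧
    (∃ M : ℝ, ∀ d, ‖e d‖ ≤ M) ∧
    ∀ a : A, ∀ ε > (0 : ℝ), ∃ d₀, ∀ d, r d₀ d → ‖a - a * e d‖ < ε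

/-- `A` has a (two-sided) bounded approximate identity: a norm-bounded net `(e_d)` over
a directed preorder such that `‖a − e_d a‖ → 0` and `‖a − a e_d‖ → 0` for every `a ∈ A`. -/
def HasBAI (A : Type u) [NonUnitalNormedRing A] : Prop :=
  ∃ (D : Type u) (r : D → D → Prop) (e : D → A),
    Nonempty D ∧ (∀ d, r d d) ∧ (∀ d₁ d₂ d₃, r d₁ d₂ → r d₂ d₃ → r d₁ d₃) ∧
    (∀ d₁ d₂, ∃ d₃, r d₁ d₃ ∧ r d₂ d₃) ∧
    (∃ M : ℝ, ∀ d, ‖e d‖ ≤ M) ∧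
    ∀ a : A, ∀ ε > (0 : ℝ), ∃ d₀, ∀ d, r d₀ d → ‖a - e d * a‖ < ε ∧ ‖a - a * e d‖ < ε

/-! The criterion "some `M` such that every finite set has an `ε`-approximate unit of norm
`≤ M`" is equivalent to having a bounded approximate identity, and it passes between `A` and
`(A)_𝒰` in both directions: the errors `‖a - e a‖`, `‖a - a e‖` of a family are computed
coordinatewise along `𝒰`, so a bound or an inequality holds in the ultrapower iff it holds
(up to `ε`) on a set of coordinates in `𝒰`. -/

/-- The three kinds of bounded approximate identity differ only in the error `g a e` that
`e` must make small at `a`. -/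
def HasBoundedApproxNet (C : Type y) [NonUnitalNormedRing C] (g : C → C → ℝ) : Prop :=
  ∃ (D : Type y) (r : D → D → Prop) (e : D → C),
    Nonempty D ∧ (∀ d, r d d) ∧ (∀ d₁ d₂ d₃, r d₁ d₂ → r d₂ d₃ → r d₁ d₃) ∧
    (∀ d₁ d₂, ∃ d₃, r d₁ d₃ ∧ r d₂ d₃) ∧
    (∃ M : ℝ, ∀ d, ‖e d‖ ≤ M) ∧
    ∀ a : C, ∀ ε > (0 : ℝ), ∃ d₀, ∀ d, r d₀ d → g a (e d) < ε

def HasBoundedFinsetApprox (C : Type y) [NonUnitalNormedRing C] (g : C → C → ℝ) : Prop :=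
  ∃ M : ℝ, ∀ s : Finset C, ∀ ε > (0 : ℝ), ∃ e : C, ‖e‖ ≤ M ∧ ∀ a ∈ s, g a e < ε

section BoundedApprox

variable {C : Type y} [NonUnitalNormedRing C] {g : C → C → ℝ}

theorem HasBoundedApproxNet.hasBoundedFinsetApprox (h : HasBoundedApproxNet C g) :
    HasBoundedFinsetApprox C g := by
  classical
  obtain ⟨D, r, e, hne, hrefl, htrans, hdir, ⟨M, hM⟩, happrox⟩ := h
  refine ⟨M, fun s ε hε => ?_⟩
  have hfinal : ∃ d₀, ∀ a ∈ s, ∀ d, r d₀ d → g a (e d) < ε := by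
    induction s using Finset.induction_on with
    | empty => exact ⟨hne.some, by simp⟩
    | insert a s _ ih =>
      obtain ⟨d₁, h₁⟩ := ih
      obtain ⟨d₂, h₂⟩ := happrox a ε hε
      obtain ⟨d₃, h₁₃, h₂₃⟩ := hdir d₁ d₂
      refine ⟨d₃, fun a' ha' d hd => ?_⟩
      rcases Finset.mem_insert.1 ha' with rfl | ha'
      · exact h₂ d (htrans _ _ _ h₂₃ hd)
      · exact h₁ a' ha' d (htrans _ _ _ h₁₃ hd)
  obtain ⟨d₀, hd₀⟩ := hfinal
  exact ⟨e d₀, hM d₀, fun a ha => hd₀ a ha d₀ (hrefl d₀)⟩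

/-- The net is indexed by pairs `(s, n)`, ordered componentwise, and `e (s, n)` is a
bounded element with error below `1 / (n + 1)` on `s`. -/
theorem HasBoundedFinsetApprox.hasBoundedApproxNet (h : HasBoundedFinsetApprox C g) :
    HasBoundedApproxNet C g := by
  classical
  obtain ⟨M, hM⟩ := h
  have hpos (n : ℕ) : (0 : ℝ) < 1 / (n + 1) := by positivity
  choose e heM herr using fun d : Finset C × ℕ => hM d.1 _ (hpos d.2)
  refine ⟨Finset C × ℕ, (· ≤ ·), e, inferInstance, fun _ => le_rfl, fun _ _ _ => le_trans,
    fun d₁ d₂ => ⟨d₁ ⊔ d₂, le_sup_left, le_sup_right⟩, ⟨M, heM⟩, fun a ε hε => ?_⟩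
  obtain ⟨n, hn⟩ := exists_nat_one_div_lt hε
  refine ⟨({a}, n), fun d hd => ?_⟩
  calc g a (e d) < 1 / (d.2 + 1) := herr d a (hd.1 (Finset.mem_singleton_self a))
    _ ≤ 1 / (n + 1) := by gcongr; exact_mod_cast hd.2
    _ < ε := hn

theorem hasBoundedApproxNet_iff_hasBoundedFinsetApprox :
    HasBoundedApproxNet C g ↔ HasBoundedFinsetApprox C g :=
  ⟨HasBoundedApproxNet.hasBoundedFinsetApprox, HasBoundedFinsetApprox.hasBoundedApproxNet⟩

end BoundedApprox

theorem hasLeftBAI_iff (C : Type y) [NonUnitalNormedRing C] :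
    HasLeftBAI C ↔ HasBoundedApproxNet C (fun a e => ‖a - e * a‖) :=
  Iff.rfl

theorem hasRightBAI_iff (C : Type y) [NonUnitalNormedRing C] :
    HasRightBAI C ↔ HasBoundedApproxNet C (fun a e => ‖a - a * e‖) :=
  Iff.rfl

theorem hasBAI_iff (C : Type y) [NonUnitalNormedRing C] :
    HasBAI C ↔ HasBoundedApproxNet C (fun a e => max ‖a - e * a‖ ‖a - a * e‖) := by
  simp only [HasBAI, HasBoundedApproxNet, max_lt_iff]

def lpConst (I : Type u) {E : Type v} [NormedAddCommGroup E] (a : E) :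
    lp (fun _ : I => E) ∞ :=
  ⟨fun _ => a, memℓp_infty ⟨‖a‖, by rintro - ⟨i, rfl⟩; exact le_rfl⟩⟩

section Ultrapower

variable {I : Type u} {A : Type v} {B : Type w}
  [NonUnitalNormedRing A] [NormedSpace ℂ A] [NonUnitalNormedRing B] [NormedSpace ℂ B]
  {𝒰 : Ultrafilter I} {π : lp (fun _ : I => A) ∞ →ₗ[ℂ] B}
  {gA : A → A → ℝ} {gB : B → B → ℝ}

/-- An approximate unit of `B` for the images of the constant families is lifted to `ℓ^∞`;
a coordinate chosen from a set in `𝒰` is then an approximate unit in `A`. -/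
theorem HasBoundedFinsetApprox.of_ultrapower (hπ : IsUltrapower 𝒰 π)
    (hg : ∀ x y, Tendsto (fun i => gA (x i) (y i)) 𝒰 (𝓝 (gB (π x) (π y))))
    (h : HasBoundedFinsetApprox B gB) : HasBoundedFinsetApprox A gA := by
  classical
  obtain ⟨hsurj, hnorm⟩ := hπ
  obtain ⟨M, hM⟩ := h
  refine ⟨M + 1, fun s ε hε => ?_⟩
  obtain ⟨f, hfM, hferr⟩ := hM (s.image fun a => π (lpConst I a)) ε hε
  obtain ⟨x, rfl⟩ := hsurj f
  have hbound : ∀ᶠ i in (𝒰 : Filter I), ‖x i‖ ≤ M + 1 :=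
    (hnorm x).eventually_le_const (by linarith)
  have herr : ∀ᶠ i in (𝒰 : Filter I), ∀ a ∈ s, gA a (x i) < ε :=
    s.eventually_all.2 fun a ha =>
      (hg (lpConst I a) x).eventually_lt_const (hferr _ (Finset.mem_image_of_mem _ ha))
  obtain ⟨i, hi⟩ := (hbound.and herr).exists
  exact ⟨x i, hi⟩

/-- Choosing an approximate unit of `A` for every coordinate of lifts of the finitely many
given elements of `B` yields a bounded family, whose image in `B` is the approximate unit. -/
theorem HasBoundedFinsetApprox.ultrapower (hπ : IsUltrapower 𝒰 π)
    (hg : ∀ x y, Tendsto (fun i => gA (x i) (y i)) 𝒰 (𝓝 (gB (π x) (π y))))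
    (h : HasBoundedFinsetApprox A gA) : HasBoundedFinsetApprox B gB := by
  classical
  obtain ⟨hsurj, hnorm⟩ := hπ
  obtain ⟨M, hM⟩ := h
  refine ⟨M, fun s ε hε => ?_⟩
  choose lift hlift using hsurj
  choose e heM herr using fun i : I => hM (s.image fun b => lift b i) (ε / 2) (half_pos hε)
  let E : lp (fun _ : I => A) ∞ := ⟨e, memℓp_infty ⟨M, by rintro - ⟨i, rfl⟩; exact heM i⟩⟩
  refine ⟨π E, le_of_tendsto (hnorm E) (Eventually.of_forall heM), fun b hb => ?_⟩
  have hle : gB b (π E) ≤ ε / 2 := by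
    rw [← hlift b]
    exact le_of_tendsto (hg (lift b) E)
      (Eventually.of_forall fun i => (herr i _ (Finset.mem_image_of_mem _ hb)).le)
  linarith

theorem hasBoundedApproxNet_iff_of_ultrapower (hπ : IsUltrapower 𝒰 π)
    (hg : ∀ x y, Tendsto (fun i => gA (x i) (y i)) 𝒰 (𝓝 (gB (π x) (π y)))) :
    HasBoundedApproxNet B gB ↔ HasBoundedApproxNet A gA := by
  simp only [hasBoundedApproxNet_iff_hasBoundedFinsetApprox]
  exact ⟨HasBoundedFinsetApprox.of_ultrapower hπ hg, HasBoundedFinsetApprox.ultrapower hπ hg⟩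

variable [IsScalarTower ℂ A A] [SMulCommClass ℂ A A]

theorem IsUltrapowerAlg.tendsto_norm_sub_mul_left (hπ : IsUltrapowerAlg 𝒰 π)
    (x y : lp (fun _ : I => A) ∞) :
    Tendsto (fun i => ‖x i - y i * x i‖) 𝒰 (𝓝 ‖π x - π y * π x‖) := by
  simpa only [map_sub, hπ.2, lp.coeFn_sub, lp.infty_coeFn_mul, Pi.sub_apply, Pi.mul_apply]
    using hπ.1.2 (x - y * x)

theorem IsUltrapowerAlg.tendsto_norm_sub_mul_right (hπ : IsUltrapowerAlg 𝒰 π)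
    (x y : lp (fun _ : I => A) ∞) :
    Tendsto (fun i => ‖x i - x i * y i‖) 𝒰 (𝓝 ‖π x - π x * π y‖) := by
  simpa only [map_sub, hπ.2, lp.coeFn_sub, lp.infty_coeFn_mul, Pi.sub_apply, Pi.mul_apply]
    using hπ.1.2 (x - x * y)

end Ultrapower

theorem ultrapower_bai_iff_bai_general
    {I : Type u} {A : Type v} {B : Type w}
    [NonUnitalNormedRing A] [NormedSpace ℂ A] [IsScalarTower ℂ A A] [SMulCommClass ℂ A A]
    [NonUnitalNormedRing B] [NormedSpace ℂ B]
    (𝒰 : Ultrafilter I) (π : lp (fun _ : I => A) ∞ →ₗ[ℂ] B)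
    (hπ : IsUltrapowerAlg 𝒰 π) :
    (HasBAI B ↔ HasBAI A) ∧ (HasLeftBAI B ↔ HasLeftBAI A) ∧
      (HasRightBAI B ↔ HasRightBAI A) := by
  have hleft := hπ.tendsto_norm_sub_mul_left
  have hright := hπ.tendsto_norm_sub_mul_right
  refine ⟨?_, ?_, ?_⟩
  · rw [hasBAI_iff, hasBAI_iff]
    exact hasBoundedApproxNet_iff_of_ultrapower hπ.1 fun x y => (hleft x y).max (hright x y)
  · rw [hasLeftBAI_iff, hasLeftBAI_iff]
    exact hasBoundedApproxNet_iff_of_ultrapower hπ.1 hleft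
  · rw [hasRightBAI_iff, hasRightBAI_iff]
    exact hasBoundedApproxNet_iff_of_ultrapower hπ.1 hright

/-- Let `𝒜` be a Banach algebra and `𝒰` an ultrafilter on an index set
`I`.  The ultrapower `(𝒜)_𝒰` has a bounded approximate identity if and only if `𝒜` does;
the same holds for bounded left approximate identities and bounded right approximate
identities. -/
theorem ultrapower_bai_iff_bai
    {I : Type u} {A : Type v} {B : Type w}
    [NonUnitalNormedRing A] [NormedSpace ℂ A] [IsScalarTower ℂ A A] [SMulCommClass ℂ A A]
    [CompleteSpace A]
    [NonUnitalNormedRing B] [NormedSpace ℂ B] [IsScalarTower ℂ B B] [SMulCommClass ℂ B B]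
    [CompleteSpace B]
    (𝒰 : Ultrafilter I) (π : lp (fun _ : I => A) ∞ →ₗ[ℂ] B)
    (hπ : IsUltrapowerAlg 𝒰 π) :
    (HasBAI B ↔ HasBAI A) ∧ (HasLeftBAI B ↔ HasLeftBAI A) ∧
      (HasRightBAI B ↔ HasRightBAI A) :=
  ultrapower_bai_iff_bai_general 𝒰 π hπ

end UPaper
end
end

section
/- Let H and K be infinite-dimensional Hilbert spaces and let 𝒰 be a countably incomplete ultrafilter on an index set I. Then the canonical map ψ₀ : (H)_𝒰 ⊗̂ (K)_𝒰 → (H ⊗̂ K)_𝒰 does not have dense range; indeed there exists τ ∈ (H ⊗̂ K)_𝒰 with ‖τ‖ = 1 whose distance from the image of ψ₀ is 1. -/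
set_option maxSynthPendingDepth 3
set_option maxHeartbeats 1000000
set_option synthInstance.maxHeartbeats 1000000

noncomputable section

open Filter Metric Topology ContinuousLinearMap
open scoped ENNReal

universe u v w y

namespace UPaper

/-- `t` realises `P` as the projective tensor product `E ⊗̂ F` of the Banach spaces `E`
and `F`: `t` is bilinear with `‖t x y‖ ≤ ‖x‖·‖y‖`, the elementary tensors span a dense
subspace of `P`, and every bounded bilinear map from `E × F` into a Banach space factors
through `t` with no increase of norm.  These properties determine `(P, t)` up to
isometric isomorphism, and give `P` the projective norm
`‖τ‖_π = inf {Σ ‖x_k‖‖y_k‖ : τ = Σ x_k ⊗ y_k}`. -/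
structure IsProjTensor (E : Type u) (F : Type v) (P : Type w)
    [NormedAddCommGroup E] [NormedSpace ℂ E] [NormedAddCommGroup F] [NormedSpace ℂ F]
    [NormedAddCommGroup P] [NormedSpace ℂ P] [CompleteSpace P]
    (t : E →L[ℂ] F →L[ℂ] P) : Prop where
  norm_le : ∀ x y, ‖t x y‖ ≤ ‖x‖ * ‖y‖
  dense_span : Dense ((Submodule.span ℂ {p : P | ∃ x y, t x y = p} : Submodule ℂ P) : Set P)
  lift : ∀ (G : Type y) [NormedAddCommGroup G] [NormedSpace ℂ G] [CompleteSpace G]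
    (b : E →L[ℂ] F →L[ℂ] G), ∃ B : P →L[ℂ] G, ‖B‖ ≤ ‖b‖ ∧ ∀ x y, B (t x y) = b x y

/-- `ψ` is the canonical map `ψ₀ : (E)_𝒰 ⊗̂ (F)_𝒰 → (E ⊗̂ F)_𝒰`, determined on
elementary tensors by `ψ₀((x_i) ⊗ (y_i)) = (x_i ⊗ y_i)`.  Here `πE`, `πF`, `πT` realise
the ultrapowers of `E`, `F` and of `T = E ⊗̂ F` (the latter with tensor map `t`), and
`tU` realises `PU = (E)_𝒰 ⊗̂ (F)_𝒰`. -/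
def IsUltraTensorMap {I : Type u} (𝒰 : Ultrafilter I)
    {E F T EU FU PU TU : Type*}
    [NormedAddCommGroup E] [NormedSpace ℂ E] [NormedAddCommGroup F] [NormedSpace ℂ F]
    [NormedAddCommGroup T] [NormedSpace ℂ T] [CompleteSpace T]
    [NormedAddCommGroup EU] [NormedSpace ℂ EU] [NormedAddCommGroup FU] [NormedSpace ℂ FU]
    [NormedAddCommGroup PU] [NormedSpace ℂ PU] [CompleteSpace PU]
    [NormedAddCommGroup TU] [NormedSpace ℂ TU]
    (πE : lp (fun _ : I => E) ∞ →ₗ[ℂ] EU) (πF : lp (fun _ : I => F) ∞ →ₗ[ℂ] FU)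
    (πT : lp (fun _ : I => T) ∞ →ₗ[ℂ] TU)
    (t : E →L[ℂ] F →L[ℂ] T) (tU : EU →L[ℂ] FU →L[ℂ] PU)
    (ψ : PU →L[ℂ] TU) : Prop :=
  ∀ (x : lp (fun _ : I => E) ∞) (y : lp (fun _ : I => F) ∞) (z : lp (fun _ : I => T) ∞),
    (∀ i, z i = t (x i) (y i)) → ψ (tU (πE x) (πF y)) = πT z

end UPaper

/-!
Fix orthonormal sequences `(e k)` in `H` and `(f k)` in `K`, and `m : I → ℕ` tending to infinity
along `𝒰` (this is what countable incompleteness provides). The diagonal means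
`z_n = n⁻¹ • ∑_{k < n} e k ⊗ f k` have projective norm one, and `τ` is the class of `(z_{m i + 1})`.

If `w = ∑_{j < r} x j ⊗ y j` and `Q` is the orthogonal projection onto `(span {x j})ᗮ`, the form
`(u, v) ↦ ∑_{k < n} ⟪e k, Q u⟫ ⟪f k, v⟫` has norm at most one and kills `w`, while by Bessel its
value on `z_n` is `1 - n⁻¹ ∑_{k < n} ‖(1 - Q) (e k)‖² ≥ 1 - r / n`. So `‖z_n - w‖ ≥ 1 - r / n`.
An element of the span of elementary tensors of `(H)_𝒰 ⊗̂ (K)_𝒰` is sent by `ψ₀` to the class of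
such sums with a fixed `r`, hence lies at distance at least `lim_𝒰 (1 - r / (m i + 1)) = 1`
from `τ`; that span is dense.
-/

open scoped InnerProductSpace

theorem exists_orthonormal_nat_of_not_finiteDimensional {𝕜 E : Type*} [RCLike 𝕜]
    [NormedAddCommGroup E] [InnerProductSpace 𝕜 E] (hE : ¬ FiniteDimensional 𝕜 E) :
    ∃ e : ℕ → E, Orthonormal 𝕜 e := by
  let b := Module.Free.chooseBasis 𝕜 E
  have : Infinite (Module.Free.ChooseBasisIndex 𝕜 E) := by
    rw [← not_finite_iff_infinite]
    exact fun _ => hE (Module.Finite.of_basis b)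
  let g := Infinite.natEmbedding (Module.Free.ChooseBasisIndex 𝕜 E)
  exact ⟨_, InnerProductSpace.gramSchmidtNormed_orthonormal
    (b.linearIndependent.comp g g.injective)⟩

theorem Orthonormal.norm_sum_inner_mul_inner_le {𝕜 E F ι : Type*} [RCLike 𝕜]
    [NormedAddCommGroup E] [InnerProductSpace 𝕜 E] [NormedAddCommGroup F]
    [InnerProductSpace 𝕜 F] {e : ι → E} {f : ι → F} (he : Orthonormal 𝕜 e)
    (hf : Orthonormal 𝕜 f) (s : Finset ι) (u : E) (v : F) :
    ‖∑ k ∈ s, ⟪e k, u⟫_𝕜 * ⟪f k, v⟫_𝕜‖ ≤ ‖u‖ * ‖v‖ :=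
  calc ‖∑ k ∈ s, ⟪e k, u⟫_𝕜 * ⟪f k, v⟫_𝕜‖
      ≤ ∑ k ∈ s, ‖⟪e k, u⟫_𝕜‖ * ‖⟪f k, v⟫_𝕜‖ := by
        simpa only [norm_mul] using norm_sum_le s fun k => ⟪e k, u⟫_𝕜 * ⟪f k, v⟫_𝕜
    _ ≤ √(∑ k ∈ s, ‖⟪e k, u⟫_𝕜‖ ^ 2) * √(∑ k ∈ s, ‖⟪f k, v⟫_𝕜‖ ^ 2) :=
        Real.sum_mul_le_sqrt_mul_sqrt s _ _
    _ ≤ ‖u‖ * ‖v‖ := by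
        gcongr <;> rw [Real.sqrt_le_left (norm_nonneg _)]
        exacts [he.sum_inner_products_le u, hf.sum_inner_products_le v]

theorem Orthonormal.sum_norm_starProjection_sq_le_finrank {𝕜 E ι : Type*} [RCLike 𝕜]
    [NormedAddCommGroup E] [InnerProductSpace 𝕜 E] {e : ι → E} (he : Orthonormal 𝕜 e)
    (V : Submodule 𝕜 E) [FiniteDimensional 𝕜 V] (s : Finset ι) :
    ∑ j ∈ s, ‖V.starProjection (e j)‖ ^ 2 ≤ Module.finrank 𝕜 V := by
  let b := stdOrthonormalBasis 𝕜 V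
  have hproj : ∀ x : E, ‖V.starProjection x‖ ^ 2 = ∑ m, ‖⟪x, (b m : E)⟫_𝕜‖ ^ 2 := fun x => by
    show ‖V.orthogonalProjectionOnto x‖ ^ 2 = _
    rw [← b.sum_sq_norm_inner_left]
    simp only [Submodule.inner_orthogonalProjectionOnto_eq_of_mem_right]
  calc ∑ j ∈ s, ‖V.starProjection (e j)‖ ^ 2
      = ∑ m, ∑ j ∈ s, ‖⟪e j, (b m : E)⟫_𝕜‖ ^ 2 := by
        simp only [hproj]; exact Finset.sum_comm
    _ ≤ ∑ m, ‖(b m : E)‖ ^ 2 := by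
        gcongr with m; exact he.sum_inner_products_le _
    _ = Module.finrank 𝕜 V := by
        simp [show ∀ m, ‖(b m : E)‖ = 1 from b.orthonormal.1]

theorem Orthonormal.card_sub_finrank_le_re_sum_inner_starProjection_orthogonal {𝕜 E ι : Type*}
    [RCLike 𝕜] [NormedAddCommGroup E] [InnerProductSpace 𝕜 E] {e : ι → E}
    (he : Orthonormal 𝕜 e) (V : Submodule 𝕜 E) [FiniteDimensional 𝕜 V] (s : Finset ι) :
    (s.card : ℝ) - Module.finrank 𝕜 V ≤ RCLike.re (∑ j ∈ s, ⟪e j, Vᗮ.starProjection (e j)⟫_𝕜) := by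
  have hpyth : ∀ j, RCLike.re ⟪e j, Vᗮ.starProjection (e j)⟫_𝕜 =
      1 - ‖V.starProjection (e j)‖ ^ 2 := fun j => by
    rw [← inner_conj_symm, RCLike.conj_re, Vᗮ.re_inner_starProjection_eq_normSq, eq_sub_iff_add_eq',
      ← one_pow 2, ← he.1 j]
    exact (Submodule.norm_sq_eq_add_norm_sq_starProjection (e j) V).symm
  rw [map_sum, Finset.sum_congr rfl fun j _ => hpyth j, Finset.sum_sub_distrib,
    Finset.sum_const, nsmul_one]
  linarith [he.sum_norm_starProjection_sq_le_finrank V s]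

def diagonalPairing (𝕜 : Type*) {E F ι : Type*} [RCLike 𝕜] [NormedAddCommGroup E]
    [InnerProductSpace 𝕜 E] [NormedAddCommGroup F] [InnerProductSpace 𝕜 F]
    (e : ι → E) (f : ι → F) (s : Finset ι) : E →L[𝕜] F →L[𝕜] 𝕜 :=
  ∑ k ∈ s, (innerSL 𝕜 (e k)).smulRight (innerSL 𝕜 (f k))

theorem diagonalPairing_apply {𝕜 E F ι : Type*} [RCLike 𝕜] [NormedAddCommGroup E]
    [InnerProductSpace 𝕜 E] [NormedAddCommGroup F] [InnerProductSpace 𝕜 F]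
    (e : ι → E) (f : ι → F) (s : Finset ι) (u : E) (v : F) :
    diagonalPairing 𝕜 e f s u v = ∑ k ∈ s, ⟪e k, u⟫_𝕜 * ⟪f k, v⟫_𝕜 := by
  simp [diagonalPairing, smul_eq_mul]

theorem Orthonormal.norm_diagonalPairing_le {𝕜 E F ι : Type*} [RCLike 𝕜]
    [NormedAddCommGroup E] [InnerProductSpace 𝕜 E] [NormedAddCommGroup F]
    [InnerProductSpace 𝕜 F] {e : ι → E} {f : ι → F} (he : Orthonormal 𝕜 e)
    (hf : Orthonormal 𝕜 f) (s : Finset ι) : ‖diagonalPairing 𝕜 e f s‖ ≤ 1 :=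
  ContinuousLinearMap.opNorm_le_bound₂ _ zero_le_one fun u v => by
    rw [diagonalPairing_apply, one_mul]
    exact he.norm_sum_inner_mul_inner_le hf s u v

theorem infDist_eq_norm_of_forall_norm_le {Y : Type*} [SeminormedAddCommGroup Y] {s : Set Y}
    {τ : Y} (h0 : 0 ∈ s) (h : ∀ y ∈ s, ‖τ‖ ≤ ‖τ - y‖) : infDist τ s = ‖τ‖ :=
  le_antisymm (by simpa using infDist_le_dist_of_mem (x := τ) h0)
    ((le_infDist ⟨0, h0⟩).2 fun y hy => by simpa [dist_eq_norm] using h y hy)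

namespace UPaper

theorem IsProjTensor.exists_dual_lift {E : Type u} {F : Type v} {P : Type w}
    [NormedAddCommGroup E] [NormedSpace ℂ E] [NormedAddCommGroup F] [NormedSpace ℂ F]
    [NormedAddCommGroup P] [NormedSpace ℂ P] [CompleteSpace P] {t : E →L[ℂ] F →L[ℂ] P}
    (ht : IsProjTensor.{u, v, w, y} E F P t) (b : E →L[ℂ] F →L[ℂ] ℂ) :
    ∃ Φ : Dl P, ‖Φ‖ ≤ ‖b‖ ∧ ∀ x y, Φ (t x y) = b x y := by
  -- `lift` only reaches targets in universe `y`, hence the detour through `ULift ℂ`.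
  let J : ULift.{y} ℂ ≃L[ℂ] ℂ := (LinearIsometryEquiv.ulift ℂ ℂ).toContinuousLinearEquiv
  let b' : E →L[ℂ] F →L[ℂ] ULift.{y} ℂ := compL ℂ F ℂ _ (J.symm : ℂ →L[ℂ] ULift.{y} ℂ) ∘L b
  have hb' : ‖b'‖ ≤ ‖b‖ := opNorm_le_bound₂ _ (norm_nonneg _) fun x y => b.le_opNorm₂ x y
  obtain ⟨B, hB, hBt⟩ := ht.lift (ULift.{y} ℂ) b'
  refine ⟨(J : ULift.{y} ℂ →L[ℂ] ℂ) ∘L B, ?_, fun x y => congrArg ULift.down (hBt x y)⟩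
  exact (opNorm_le_bound _ (norm_nonneg _) fun p => B.le_opNorm p).trans (hB.trans hb')

def diagonalMean {E F P : Type*} [NormedAddCommGroup E] [NormedSpace ℂ E]
    [NormedAddCommGroup F] [NormedSpace ℂ F] [NormedAddCommGroup P] [NormedSpace ℂ P]
    (t : E →L[ℂ] F →L[ℂ] P) (e : ℕ → E) (f : ℕ → F) (n : ℕ) : P :=
  (n : ℂ)⁻¹ • ∑ k ∈ Finset.range n, t (e k) (f k)

theorem IsProjTensor.one_sub_div_le_norm_diagonalMean_sub {H : Type u} {K : Type v} {T : Type w}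
    [NormedAddCommGroup H] [InnerProductSpace ℂ H] [NormedAddCommGroup K]
    [InnerProductSpace ℂ K] [NormedAddCommGroup T] [NormedSpace ℂ T] [CompleteSpace T]
    {t : H →L[ℂ] K →L[ℂ] T} (ht : IsProjTensor.{u, v, w, y} H K T t) {e : ℕ → H} {f : ℕ → K}
    (he : Orthonormal ℂ e) (hf : Orthonormal ℂ f) {n : ℕ} (hn : 0 < n) {ι : Type*} [Fintype ι]
    (x : ι → H) (y : ι → K) :
    1 - (Fintype.card ι : ℝ) / n ≤ ‖diagonalMean t e f n - ∑ k, t (x k) (y k)‖ := by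
  let V := Submodule.span ℂ (Set.range x)
  have : FiniteDimensional ℂ V := FiniteDimensional.span_of_finite ℂ (Set.finite_range x)
  let Q := Vᗮ.starProjection
  let B := diagonalPairing ℂ e f (Finset.range n) ∘L Q
  have hBnorm : ‖B‖ ≤ 1 :=
    (opNorm_comp_le _ _).trans (mul_le_one₀ (he.norm_diagonalPairing_le hf _) (norm_nonneg _)
      Vᗮ.starProjection_norm_le)
  obtain ⟨Φ, hΦ, hΦt⟩ := ht.exists_dual_lift B
  have hkill : ∀ k, B (x k) = 0 := fun k => by
    have hQ : Q (x k) = 0 :=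
      Submodule.starProjection_orthogonal_apply_eq_zero (Submodule.subset_span ⟨k, rfl⟩)
    simp [B, hQ]
  have hdiag : ∀ j ∈ Finset.range n, B (e j) (f j) = ⟪e j, Q (e j)⟫_ℂ := fun j hj => by
    simp [B, diagonalPairing_apply, orthonormal_iff_ite.mp hf, (Finset.mem_range.mp hj).not_ge]
  have hΦz : Φ (diagonalMean t e f n - ∑ k, t (x k) (y k)) =
      (n : ℂ)⁻¹ * ∑ j ∈ Finset.range n, ⟪e j, Q (e j)⟫_ℂ := by
    simp only [diagonalMean, map_sub, map_smul, map_sum, hΦt, hkill, zero_apply,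
      Finset.sum_const_zero, sub_zero, smul_eq_mul, Finset.sum_congr rfl hdiag]
  have hre := he.card_sub_finrank_le_re_sum_inner_starProjection_orthogonal V (Finset.range n)
  have hV : Module.finrank ℂ V ≤ Fintype.card ι := finrank_range_le_card x
  have hn' : (0 : ℝ) < n := by exact_mod_cast hn
  calc 1 - (Fintype.card ι : ℝ) / n
      ≤ (n : ℝ)⁻¹ * (n - Module.finrank ℂ V) := by
        rw [mul_sub, inv_mul_cancel₀ hn'.ne', ← div_eq_inv_mul]
        gcongr
    _ ≤ (n : ℝ)⁻¹ * RCLike.re (∑ j ∈ Finset.range n, ⟪e j, Q (e j)⟫_ℂ) := by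
        gcongr
        simpa only [Finset.card_range] using hre
    _ = RCLike.re (Φ (diagonalMean t e f n - ∑ k, t (x k) (y k))) := by
        rw [hΦz]; simp
    _ ≤ ‖diagonalMean t e f n - ∑ k, t (x k) (y k)‖ :=
        (RCLike.re_le_norm _).trans ((Φ.le_of_opNorm_le (hΦ.trans hBnorm) _).trans_eq (one_mul _))

theorem IsProjTensor.norm_diagonalMean {H : Type u} {K : Type v} {T : Type w}
    [NormedAddCommGroup H] [InnerProductSpace ℂ H] [NormedAddCommGroup K]
    [InnerProductSpace ℂ K] [NormedAddCommGroup T] [NormedSpace ℂ T] [CompleteSpace T]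
    {t : H →L[ℂ] K →L[ℂ] T} (ht : IsProjTensor.{u, v, w, y} H K T t) {e : ℕ → H} {f : ℕ → K}
    (he : Orthonormal ℂ e) (hf : Orthonormal ℂ f) {n : ℕ} (hn : 0 < n) :
    ‖diagonalMean t e f n‖ = 1 := by
  refine le_antisymm ?_ (by
    simpa using
      ht.one_sub_div_le_norm_diagonalMean_sub he hf hn (Empty.elim : Empty → H) Empty.elim)
  have hterm : ∀ k, ‖t (e k) (f k)‖ ≤ 1 := fun k => by
    simpa [he.1 k, hf.1 k] using ht.norm_le (e k) (f k)
  calc ‖diagonalMean t e f n‖ ≤ (n : ℝ)⁻¹ * ∑ k ∈ Finset.range n, ‖t (e k) (f k)‖ := by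
        rw [diagonalMean, norm_smul, norm_inv, Complex.norm_natCast]
        gcongr
        exact norm_sum_le _ _
    _ ≤ (n : ℝ)⁻¹ * n := by
        gcongr
        simpa using Finset.sum_le_sum fun k (_ : k ∈ Finset.range n) => hterm k
    _ = 1 := inv_mul_cancel₀ (by positivity)

theorem CountablyIncomplete.exists_tendsto_atTop {I : Type*} {𝒰 : Ultrafilter I}
    (h : CountablyIncomplete 𝒰) : ∃ m : I → ℕ, Tendsto m 𝒰 atTop := by
  classical
  obtain ⟨U, hU, hmono, hempty⟩ := h
  have hout : ∀ i, ∃ n, i ∉ U n := fun i => by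
    simpa using Set.eq_empty_iff_forall_notMem.1 hempty i
  refine ⟨fun i => Nat.find (hout i), tendsto_atTop.2 fun b => ?_⟩
  filter_upwards [hU b] with i hi
  by_contra! hlt
  exact Nat.find_spec (hout i) (antitone_nat_of_succ_le hmono hlt.le hi)

def lpMap₂ {I E F G : Type*} [NormedAddCommGroup E] [NormedSpace ℂ E]
    [NormedAddCommGroup F] [NormedSpace ℂ F] [NormedAddCommGroup G] [NormedSpace ℂ G]
    (t : E →L[ℂ] F →L[ℂ] G) (x : lp (fun _ : I => E) ∞) (y : lp (fun _ : I => F) ∞) :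
    lp (fun _ : I => G) ∞ :=
  ⟨fun i => t (x i) (y i), memℓp_infty ⟨‖t‖ * ‖x‖ * ‖y‖, by
    rintro _ ⟨i, rfl⟩
    refine (t.le_opNorm₂ _ _).trans ?_
    gcongr <;> exact lp.norm_apply_le_norm ENNReal.top_ne_zero _ _⟩⟩

@[simp]
theorem lpMap₂_apply {I E F G : Type*} [NormedAddCommGroup E] [NormedSpace ℂ E]
    [NormedAddCommGroup F] [NormedSpace ℂ F] [NormedAddCommGroup G] [NormedSpace ℂ G]
    (t : E →L[ℂ] F →L[ℂ] G) (x : lp (fun _ : I => E) ∞) (y : lp (fun _ : I => F) ∞) (i : I) :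
    lpMap₂ t x y i = t (x i) (y i) :=
  rfl

theorem IsUltrapower.norm_map_of_forall_norm_eq {I E F : Type*} {𝒰 : Ultrafilter I}
    [NormedAddCommGroup E] [NormedSpace ℂ E] [NormedAddCommGroup F] [NormedSpace ℂ F]
    {π : lp (fun _ : I => E) ∞ →ₗ[ℂ] F} (hπ : IsUltrapower 𝒰 π) {x : lp (fun _ : I => E) ∞}
    {c : ℝ} (hx : ∀ i, ‖x i‖ = c) : ‖π x‖ = c :=
  tendsto_nhds_unique (hπ.2 x) (by simpa only [hx] using tendsto_const_nhds)

theorem IsUltrapower.le_norm_map_of_tendsto {I E F : Type*} {𝒰 : Ultrafilter I}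
    [NormedAddCommGroup E] [NormedSpace ℂ E] [NormedAddCommGroup F] [NormedSpace ℂ F]
    {π : lp (fun _ : I => E) ∞ →ₗ[ℂ] F} (hπ : IsUltrapower 𝒰 π) {x : lp (fun _ : I => E) ∞}
    {g : I → ℝ} {c : ℝ} (hg : Tendsto g 𝒰 (𝓝 c)) (hle : ∀ i, g i ≤ ‖x i‖) : c ≤ ‖π x‖ :=
  le_of_tendsto_of_tendsto' hg (hπ.2 x) hle

theorem IsUltraTensorMap.exists_apply_eq_sum_lpMap₂ {I : Type u} {𝒰 : Ultrafilter I}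
    {E F T EU FU PU TU : Type*}
    [NormedAddCommGroup E] [NormedSpace ℂ E] [NormedAddCommGroup F] [NormedSpace ℂ F]
    [NormedAddCommGroup T] [NormedSpace ℂ T] [CompleteSpace T]
    [NormedAddCommGroup EU] [NormedSpace ℂ EU] [NormedAddCommGroup FU] [NormedSpace ℂ FU]
    [NormedAddCommGroup PU] [NormedSpace ℂ PU] [CompleteSpace PU]
    [NormedAddCommGroup TU] [NormedSpace ℂ TU]
    {πE : lp (fun _ : I => E) ∞ →ₗ[ℂ] EU} {πF : lp (fun _ : I => F) ∞ →ₗ[ℂ] FU}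
    {πT : lp (fun _ : I => T) ∞ →ₗ[ℂ] TU}
    {t : E →L[ℂ] F →L[ℂ] T} {tU : EU →L[ℂ] FU →L[ℂ] PU} {ψ : PU →L[ℂ] TU}
    (hψ : IsUltraTensorMap 𝒰 πE πF πT t tU ψ) (hπE : Function.Surjective πE)
    (hπF : Function.Surjective πF) {p : PU}
    (hp : p ∈ Submodule.span ℂ {p : PU | ∃ x y, tU x y = p}) :
    ∃ (r : ℕ) (x : Fin r → lp (fun _ : I => E) ∞) (y : Fin r → lp (fun _ : I => F) ∞),
      ψ p = πT (∑ k, lpMap₂ t (x k) (y k)) := by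
  obtain ⟨r, c, g, rfl⟩ := Submodule.mem_span_set'.1 hp
  choose a b hab using fun k => (g k).2
  choose x hx using fun k => hπE (c k • a k)
  choose y hy using fun k => hπF (b k)
  refine ⟨r, x, y, ?_⟩
  have hg : ∀ k, c k • (g k : PU) = tU (πE (x k)) (πF (y k)) := fun k => by
    rw [hx, hy, map_smul, smul_apply, hab]
  simp only [hg, map_sum]
  exact Finset.sum_congr rfl fun k _ => hψ _ _ _ fun _ => rfl

theorem IsUltrapower.one_le_norm_map_diagonal_sub {I : Type*} {𝒰 : Ultrafilter I}
    {H : Type u} {K : Type v} {T : Type w} {TU : Type*}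
    [NormedAddCommGroup H] [InnerProductSpace ℂ H] [NormedAddCommGroup K]
    [InnerProductSpace ℂ K] [NormedAddCommGroup T] [NormedSpace ℂ T] [CompleteSpace T]
    [NormedAddCommGroup TU] [NormedSpace ℂ TU] {πT : lp (fun _ : I => T) ∞ →ₗ[ℂ] TU}
    (hπT : IsUltrapower 𝒰 πT) {t : H →L[ℂ] K →L[ℂ] T} (ht : IsProjTensor.{u, v, w, y} H K T t)
    {e : ℕ → H} {f : ℕ → K} (he : Orthonormal ℂ e) (hf : Orthonormal ℂ f) {m : I → ℕ}
    (hm : Tendsto m 𝒰 atTop) {z : lp (fun _ : I => T) ∞}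
    (hz : ∀ i, z i = diagonalMean t e f (m i + 1)) {r : ℕ} (x : Fin r → lp (fun _ : I => H) ∞)
    (y : Fin r → lp (fun _ : I => K) ∞) : 1 ≤ ‖πT (z - ∑ k, lpMap₂ t (x k) (y k))‖ := by
  have hlim : Tendsto (fun i => 1 - (r : ℝ) / (m i + 1 : ℕ)) 𝒰 (𝓝 1) := by
    simpa using tendsto_const_nhds.sub
      ((tendsto_const_div_atTop_nhds_zero_nat (r : ℝ)).comp ((tendsto_add_atTop_nat 1).comp hm))
  refine hπT.le_norm_map_of_tendsto hlim fun i => ?_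
  have hcoord : (z - ∑ k, lpMap₂ t (x k) (y k)) i =
      diagonalMean t e f (m i + 1) - ∑ k, t (x k i) (y k i) := by
    rw [lp.coeFn_sub, lp.coeFn_sum, Pi.sub_apply, Finset.sum_apply, hz]
    simp
  simpa [hcoord] using ht.one_sub_div_le_norm_diagonalMean_sub he hf
    (m i).succ_pos (fun k => x k i) (fun k => y k i)

theorem psi_not_denseRange_hilbert_general
    {I : Type u} (𝒰 : Ultrafilter I) (h𝒰 : CountablyIncomplete 𝒰)
    {H K T HU KU PU TU : Type*}
    [NormedAddCommGroup H] [InnerProductSpace ℂ H]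
    [NormedAddCommGroup K] [InnerProductSpace ℂ K]
    (hH : ¬ FiniteDimensional ℂ H) (hK : ¬ FiniteDimensional ℂ K)
    [NormedAddCommGroup T] [NormedSpace ℂ T] [CompleteSpace T]
    [NormedAddCommGroup HU] [NormedSpace ℂ HU]
    [NormedAddCommGroup KU] [NormedSpace ℂ KU]
    [NormedAddCommGroup PU] [NormedSpace ℂ PU] [CompleteSpace PU]
    [NormedAddCommGroup TU] [NormedSpace ℂ TU]
    (t : H →L[ℂ] K →L[ℂ] T) (ht : IsProjTensor H K T t)
    (πH : lp (fun _ : I => H) ∞ →ₗ[ℂ] HU) (hπH : IsUltrapower 𝒰 πH)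
    (πK : lp (fun _ : I => K) ∞ →ₗ[ℂ] KU) (hπK : IsUltrapower 𝒰 πK)
    (πT : lp (fun _ : I => T) ∞ →ₗ[ℂ] TU) (hπT : IsUltrapower 𝒰 πT)
    (tU : HU →L[ℂ] KU →L[ℂ] PU) (htU : IsProjTensor HU KU PU tU)
    (ψ : PU →L[ℂ] TU) (hψ : IsUltraTensorMap 𝒰 πH πK πT t tU ψ) :
    ¬ DenseRange ψ ∧ ∃ τ : TU, ‖τ‖ = 1 ∧ Metric.infDist τ (Set.range ψ) = 1 := by
  obtain ⟨m, hm⟩ := h𝒰.exists_tendsto_atTop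
  obtain ⟨e, he⟩ := exists_orthonormal_nat_of_not_finiteDimensional hH
  obtain ⟨f, hf⟩ := exists_orthonormal_nat_of_not_finiteDimensional hK
  have hdiag (i : I) : ‖diagonalMean t e f (m i + 1)‖ = 1 :=
    ht.norm_diagonalMean he hf (m i).succ_pos
  let z : lp (fun _ : I => T) ∞ :=
    ⟨fun i => diagonalMean t e f (m i + 1),
      memℓp_infty ⟨1, by rintro _ ⟨i, rfl⟩; exact (hdiag i).le⟩⟩
  have hτ : ‖πT z‖ = 1 := hπT.norm_map_of_forall_norm_eq hdiag
  have hspan : ∀ p ∈ Submodule.span ℂ {p : PU | ∃ x y, tU x y = p}, 1 ≤ ‖πT z - ψ p‖ := by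
    intro p hp
    obtain ⟨r, x, y, hxy⟩ := hψ.exists_apply_eq_sum_lpMap₂ hπH.1 hπK.1 hp
    rw [hxy, ← map_sub]
    exact hπT.one_le_norm_map_diagonal_sub ht he hf hm (fun _ => rfl) x y
  have hdist : infDist (πT z) (Set.range ψ) = 1 := by
    refine hτ ▸ infDist_eq_norm_of_forall_norm_le ⟨0, map_zero ψ⟩ ?_
    rintro _ ⟨p, rfl⟩
    exact hτ ▸ htU.dense_span.induction hspan (isClosed_le continuous_const (by fun_prop)) p
  refine ⟨fun hψd => ?_, πT z, hτ, hdist⟩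
  exact one_ne_zero <|
    hdist.symm.trans (infDist_zero_of_mem_closure (hψd.closure_range ▸ Set.mem_univ (πT z)))

/-- Let `H` and `K` be infinite-dimensional Hilbert spaces and `𝒰` a
countably incomplete ultrafilter on `I`.  Then the canonical map
`ψ₀ : (H)_𝒰 ⊗̂ (K)_𝒰 → (H ⊗̂ K)_𝒰` does not have dense range; indeed there is a
`τ ∈ (H ⊗̂ K)_𝒰` of norm one whose distance to the image of `ψ₀` equals `1`. -/
theorem psi_not_denseRange_hilbert
    {I : Type u} (𝒰 : Ultrafilter I) (h𝒰 : CountablyIncomplete 𝒰)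
    {H K T HU KU PU TU : Type*}
    [NormedAddCommGroup H] [InnerProductSpace ℂ H] [CompleteSpace H]
    [NormedAddCommGroup K] [InnerProductSpace ℂ K] [CompleteSpace K]
    (hH : ¬ FiniteDimensional ℂ H) (hK : ¬ FiniteDimensional ℂ K)
    [NormedAddCommGroup T] [NormedSpace ℂ T] [CompleteSpace T]
    [NormedAddCommGroup HU] [NormedSpace ℂ HU] [CompleteSpace HU]
    [NormedAddCommGroup KU] [NormedSpace ℂ KU] [CompleteSpace KU]
    [NormedAddCommGroup PU] [NormedSpace ℂ PU] [CompleteSpace PU]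
    [NormedAddCommGroup TU] [NormedSpace ℂ TU] [CompleteSpace TU]
    (t : H →L[ℂ] K →L[ℂ] T) (ht : IsProjTensor H K T t)
    (πH : lp (fun _ : I => H) ∞ →ₗ[ℂ] HU) (hπH : IsUltrapower 𝒰 πH)
    (πK : lp (fun _ : I => K) ∞ →ₗ[ℂ] KU) (hπK : IsUltrapower 𝒰 πK)
    (πT : lp (fun _ : I => T) ∞ →ₗ[ℂ] TU) (hπT : IsUltrapower 𝒰 πT)
    (tU : HU →L[ℂ] KU →L[ℂ] PU) (htU : IsProjTensor HU KU PU tU)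
    (ψ : PU →L[ℂ] TU) (hψ : IsUltraTensorMap 𝒰 πH πK πT t tU ψ) :
    ¬ DenseRange ψ ∧ ∃ τ : TU, ‖τ‖ = 1 ∧ Metric.infDist τ (Set.range ψ) = 1 :=
  psi_not_denseRange_hilbert_general 𝒰 h𝒰 hH hK t ht πH hπH πK hπK πT hπT tU htU ψ hψ

end UPaper
end
end
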